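/- Let λ ∈ P⁺ be nonzero. Then V(ξ(1,λ)) is isomorphic, as a 𝔤[t]-module, to the quotient of W_loc(λ) by the submodule generated by the elements (x_α⁻ ⊗ t^{s_α}) w_λ for α ∈ R⁺ with d_α > 1, together with the elements (x_α⁻ ⊗ t^{s_α−1})² w_λ for α ∈ R⁺ with d_α = 3 and m_α = 1. In particular, if 𝔤 is simply laced then W_loc(λ) ≅ V(ξ(1,λ)). -/

import Mathlib

open scoped TensorProduct
open Polynomial

noncomputable section

/-! ## The current algebra `𝔤[t] = ℂ[t] ⊗ 𝔤` and its universal enveloping algebra -/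

variable (L : Type) [LieRing L] [LieAlgebra ℂ L]

/-- The current algebra `𝔤[t] = ℂ[t] ⊗ 𝔤` of a complex Lie algebra `𝔤`. -/
abbrev CurAlg := Polynomial ℂ ⊗[ℂ] L

instance : LieAlgebra ℂ (CurAlg L) where
  lie_smul c x y := by
    have h := lie_smul (algebraMap ℂ (Polynomial ℂ) c) x y
    rwa [algebraMap_smul, algebraMap_smul] at h

/-- The universal enveloping algebra `U(𝔤[t])`. -/
abbrev UCA := UniversalEnvelopingAlgebra ℂ (CurAlg L)

attribute [local instance 100] LieRing.ofAssociativeRing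

/-- The canonical embedding `𝔤[t] → U(𝔤[t])`. -/
abbrev ιU : CurAlg L →ₗ⁅ℂ⁆ UCA L := UniversalEnvelopingAlgebra.ι ℂ

variable {L}

/-- The element `x ⊗ t^s` of `U(𝔤[t])`. -/
abbrev xt (x : L) (s : ℕ) : UCA L := ιU L ((X ^ s : ℂ[X]) ⊗ₜ x)

/-- Divided power `u^{(q)} = u^q/q!`. -/
def dpow (u : UCA L) (q : ℕ) : UCA L := (q.factorial : ℂ)⁻¹ • u ^ q

/-! ## Root data for `𝔤`, the local Weyl module and the modules `V(ξ)`.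

`Φ` indexes the positive roots `R⁺`; `ep α`, `em α`, `hc α` are the elements
`x_α⁺ ∈ 𝔤_α`, `x_α⁻ ∈ 𝔤_{-α}` and the coroot `h_α`; `ιI` indexes the simple roots via
`simple : ιI → Φ`.  The functional `lam` is the weight `λ` and `lamNat α = λ(h_α) ∈ ℤ≥0`. -/

variable {Φ ιI : Type}

/-- The nilpotent subalgebra `𝔫⁺`, namely the span of the positive root vectors. -/
def posPart (ep : Φ → L) : Submodule ℂ L := Submodule.span ℂ (Set.range ep)

/-- The Cartan subalgebra `𝔥`, namely the span of the coroots. -/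
def cartan (hc : Φ → L) : Submodule ℂ L := Submodule.span ℂ (Set.range hc)

/-- The generators of the defining left ideal of the local Weyl module `W_loc(λ)`. -/
def weylGens (ep em hc : Φ → L) (simple : ιI → Φ) (lam : Module.Dual ℂ L)
    (lamNat : Φ → ℕ) : Set (UCA L) :=
  {u | ∃ x ∈ posPart ep, ∃ s : ℕ, u = xt x s} ∪
    {u | ∃ x ∈ cartan hc, ∃ s : ℕ, u = xt x s - (if s = 0 then lam x else 0) • 1} ∪
    {u | ∃ i : ιI, u = xt (em (simple i)) 0 ^ (lamNat (simple i) + 1)}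

/-- The local Weyl module `W_loc(λ)`, as quotient of `U(𝔤[t])` by the left ideal generated by
the elements `x ⊗ t^s` for `x ∈ 𝔫⁺`, `h ⊗ t^s − δ_{s,0}λ(h)·1` for `h ∈ 𝔥`, and
`(x_i⁻ ⊗ 1)^{λ(h_i)+1}` for `i ∈ I`. -/
abbrev Wloc (ep em hc : Φ → L) (simple : ιI → Φ) (lam : Module.Dual ℂ L) (lamNat : Φ → ℕ) :=
  (UCA L) ⧸ Submodule.span (UCA L) (weylGens ep em hc simple lam lamNat)

/-- The cyclic generator `w_λ` of `W_loc(λ)`, the image of `1`. -/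
def wLam (ep em hc : Φ → L) (simple : ιI → Φ) (lam : Module.Dual ℂ L) (lamNat : Φ → ℕ) :
    Wloc ep em hc simple lam lamNat := Submodule.Quotient.mk 1

/-- The sum `Σ_{j ≥ k+1} ξ_j` of the parts of a partition beyond the `k`-th one (the partition
being recorded as the function `p : ℕ → ℕ` of its parts in `0`-based indexing, `p j = ξ_{j+1}`). -/
def tailSum (p : ℕ → ℕ) (k : ℕ) : ℕ := ∑ᶠ j ∈ {j : ℕ | k ≤ j}, p j

/-- `ξ = (ξ^α)_{α ∈ R⁺}` is a `λ`-compatible tuple of partitions: each `ξ^α` is a partition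
(weakly decreasing, finitely many nonzero parts) with `|ξ^α| = λ(h_α)`. -/
def IsCompatible (lamNat : Φ → ℕ) (ξ : Φ → ℕ → ℕ) : Prop :=
  ∀ α, Antitone (ξ α) ∧ (∃ N, ∀ j, N ≤ j → ξ α j = 0) ∧ ∑ᶠ j, ξ α j = lamNat α

/-- The generators `(x_α⁺ ⊗ t)^s (x_α⁻ ⊗ 1)^{s+r} w_λ`, for `α ∈ R⁺` and `s, r ≥ 1` such that
`s + r ≥ 1 + rk + Σ_{j ≥ k+1} ξ^α_j` for some `k ≥ 1`, of the submodule of `W_loc(λ)` defining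
`V(ξ)`. -/
def xiGens (ep em hc : Φ → L) (simple : ιI → Φ) (lam : Module.Dual ℂ L) (lamNat : Φ → ℕ)
    (ξ : Φ → ℕ → ℕ) : Set (Wloc ep em hc simple lam lamNat) :=
  {v | ∃ (α : Φ) (s r : ℕ), 1 ≤ s ∧ 1 ≤ r ∧
        (∃ k, 1 ≤ k ∧ s + r ≥ 1 + r * k + tailSum (ξ α) k) ∧
        v = (xt (ep α) 1 ^ s * xt (em α) 0 ^ (s + r)) • wLam ep em hc simple lam lamNat}

/-- The module `V(ξ)`. -/
abbrev VXi (ep em hc : Φ → L) (simple : ιI → Φ) (lam : Module.Dual ℂ L) (lamNat : Φ → ℕ)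
    (ξ : Φ → ℕ → ℕ) :=
  Wloc ep em hc simple lam lamNat ⧸
    Submodule.span (UCA L) (xiGens ep em hc simple lam lamNat ξ)

/-- The cyclic generator `v_ξ` of `V(ξ)`, the image of `w_λ`. -/
def vXi (ep em hc : Φ → L) (simple : ιI → Φ) (lam : Module.Dual ℂ L) (lamNat : Φ → ℕ)
    (ξ : Φ → ℕ → ℕ) : VXi ep em hc simple lam lamNat ξ :=
  Submodule.Quotient.mk (wLam ep em hc simple lam lamNat)

/-!
Fix `α`, put `e = x_α⁺ ⊗ t`, `f_b = x_α⁻ ⊗ t^b` and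
`T_r(s) = ∑_{b₁+⋯+b_r = s} f_{b₁} ⋯ f_{b_r} w_λ`. Since `e` and the `h_α ⊗ t^k` (`k > 0`) kill
`w_λ`, commuting `e` through the `f`'s gives `e · T_{r+1}(s) = -(r+1)(s+1) · T_r(s+1)`, hence
Garland's identity `(x_α⁺ ⊗ t)^s (x_α⁻ ⊗ 1)^{s+r} w_λ = c · T_r(s)` with `c ≠ 0`. So the defining
relations of `V(ξ(1,λ))` are the `T_r(s)`. For `s > r(s_α - 1)` every monomial of `T_r(s)` has a
factor `f_b` with `b ≥ s_α`, and `f_b w_λ` is a multiple of `(h_α ⊗ t^{b - s_α}) f_{s_α} w_λ`,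
where `f_{s_α} w_λ = T_1(s_α)` is itself a relation. Apart from relations with
`s + r > λ(h_α)`, which vanish, the only other one is `T_2(2s_α - 2) ≡ f_{s_α-1}² w_λ`, present
exactly when `d_α = 3` and `m_α = 1`. Finally `f_b w_λ = 0` for `b ≥ λ(h_α)`, which disposes of
the case `d_α = 1`.
-/

open Finset

theorem sum_range_sum_range_sub_comm {M : Type*} [AddCommMonoid M] (n : ℕ) (F : ℕ → ℕ → M) :
    ∑ c ∈ range (n + 1), ∑ a ∈ range (n - c + 1), F c a
      = ∑ a ∈ range (n + 1), ∑ c ∈ range (n - a + 1), F c a :=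
  sum_comm' fun c a => by simp only [mem_range]; omega

theorem sum_range_sum_range_sub_eq_sum_range_sum_range {M : Type*} [AddCommMonoid M] (n : ℕ)
    (F : ℕ → ℕ → M) :
    ∑ c ∈ range (n + 1), ∑ a ∈ range (n - c + 1), F c a
      = ∑ m ∈ range (n + 1), ∑ k ∈ range (m + 1), F k (m - k) := by
  rw [sum_sigma', sum_sigma']
  refine sum_nbij' (fun p => ⟨p.1 + p.2, p.1⟩) (fun p => ⟨p.2, p.1 - p.2⟩) ?_ ?_ ?_ ?_ ?_ <;>
    rintro ⟨i, j⟩ hp <;> simp only [mem_sigma, mem_range] at hp ⊢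
  · omega
  · omega
  · simp [show i + j - i = j by omega]
  · simp [show j + (i - j) = i by omega]
  · congr 1; omega

theorem sum_range_sum_range_sub_add {M : Type*} [AddCommMonoid M] (n : ℕ) (G : ℕ → M) :
    ∑ c ∈ range (n + 1), ∑ a ∈ range (n - c + 1), G (c + a)
      = ∑ m ∈ range (n + 1), (m + 1) • G m := by
  rw [sum_range_sum_range_sub_eq_sum_range_sum_range n (fun c a => G (c + a))]
  refine sum_congr rfl fun m _ => ?_
  rw [sum_congr rfl fun k hk => congrArg G (Nat.add_sub_of_le (Nat.lt_succ_iff.1 (mem_range.1 hk))),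
    sum_const, card_range]


/-- The partition `(d^{σ-1}, m)`, i.e. `ξ(1,λ)^α` for `σ = s_α`, `d = d_α`, `m = m_α`. -/
def levelOnePartition (σ d m : ℕ) : ℕ → ℕ :=
  fun j => if j + 1 < σ then d else if j + 1 = σ then m else 0

theorem tailSum_levelOnePartition (σ d m k : ℕ) :
    tailSum (levelOnePartition σ d m) k = (σ - 1 - k) * d + if k < σ then m else 0 := by
  have hsupp : ∀ j, levelOnePartition σ d m j ≠ 0 → j < σ := fun j hj => by
    by_contra hjσ
    exact hj (by rw [levelOnePartition, if_neg (by omega), if_neg (by omega)])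
  rw [tailSum, finsum_mem_eq_sum_of_subset _ (s := {j | k ≤ j}) (t := Ico k σ)
    (fun j hj => mem_coe.2 (mem_Ico.2 ⟨hj.1, hsupp j hj.2⟩)) (fun j hj => (mem_Ico.1 hj).1)]
  rcases Nat.lt_or_ge k σ with hk | hk
  · obtain ⟨σ, rfl⟩ : ∃ σ', σ = σ' + 1 := ⟨σ - 1, by omega⟩
    have hbody : ∀ j ∈ Ico k σ, levelOnePartition (σ + 1) d m j = d := fun j hj => by
      rw [levelOnePartition, if_pos (by simp only [mem_Ico] at hj; omega)]
    rw [sum_Ico_succ_top (by omega), sum_congr rfl hbody, sum_const, Nat.card_Ico, smul_eq_mul,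
      if_pos hk, levelOnePartition, if_neg (by omega), if_pos rfl, Nat.add_sub_cancel]
  · rw [Ico_eq_empty (by omega), if_neg (by omega), sum_empty, Nat.sub_eq_zero_of_le (by omega),
      zero_mul, zero_add]

/-- Below the vanishing bound `s + r ≤ λ(h_α)`, a relation of `V(ξ(1,λ))` not covered by
`compositionSum_mem` only occurs for `d = 3`, `m = 1`, `r = 2`. -/
theorem levelOne_relation_exceptional {s r k σ d m : ℕ} (hσ : 1 ≤ σ) (hm : 1 ≤ m) (hd : d ≤ 3)
    (hcond : 1 + r * k + tailSum (levelOnePartition σ d m) k ≤ s + r)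
    (hN : s + r ≤ (σ - 1) * d + m) (hs : s ≤ r * (σ - 1)) :
    d = 3 ∧ m = 1 ∧ r = 2 ∧ s = 2 * (σ - 1) := by
  obtain ⟨σ, rfl⟩ : ∃ σ', σ = σ' + 1 := ⟨σ - 1, by omega⟩
  rw [tailSum_levelOnePartition, Nat.add_sub_cancel] at hcond
  rw [Nat.add_sub_cancel] at hN hs ⊢
  rcases Nat.lt_or_ge k (σ + 1) with hkσ | hkσ
  · obtain ⟨j, rfl⟩ : ∃ j, σ = k + j := ⟨σ - k, by omega⟩
    rw [if_pos hkσ, Nat.add_sub_cancel_left] at hcond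
    have hrd : r < d := by nlinarith
    interval_cases d <;> interval_cases r <;> omega
  · rw [if_neg (by omega), Nat.sub_eq_zero_of_le (by omega), zero_mul] at hcond
    nlinarith [Nat.mul_le_mul_left r hkσ]

theorem sum_range_sub_smul_add_sum_range_succ_smul {R M : Type*} [Semiring R] [AddCommMonoid M]
    [Module R M] (n : ℕ) (g : ℕ → M) :
    ∑ a ∈ range (n + 1), ((n + 1 - a : ℕ) : R) • g a
        + ∑ a ∈ range (n + 1), ((a + 1 : ℕ) : R) • g (a + 1)
      = ((n + 1 : ℕ) : R) • ∑ a ∈ range (n + 2), g a := by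
  have h1 : ∑ a ∈ range (n + 1), ((n + 1 - a : ℕ) : R) • g a
      = ∑ a ∈ range (n + 2), ((n + 1 - a : ℕ) : R) • g a := by
    rw [sum_range_succ _ (n + 1)]; simp
  have h2 : ∑ a ∈ range (n + 1), ((a + 1 : ℕ) : R) • g (a + 1)
      = ∑ a ∈ range (n + 2), ((a : ℕ) : R) • g a := by
    rw [sum_range_succ' _ (n + 1)]; simp
  rw [h1, h2, ← sum_add_distrib, smul_sum]
  refine sum_congr rfl fun a ha => ?_
  rw [← add_smul, ← Nat.cast_add, Nat.sub_add_cancel (by simp only [mem_range] at ha; omega)]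
section CurrentSl2

variable {M : Type} [AddCommGroup M] [Module (UCA L) M]

theorem xt_mul_sub_mul_xt (x y : L) (a b : ℕ) :
    xt x a * xt y b - xt y b * xt x a = xt ⁅x, y⁆ (a + b) := by
  have h : ιU L ⁅(X ^ a : ℂ[X]) ⊗ₜ[ℂ] x, (X ^ b : ℂ[X]) ⊗ₜ[ℂ] y⁆ = ⁅xt x a, xt y b⁆ :=
    LieHom.map_lie _ _ _
  rw [Ring.lie_def] at h
  rw [← h, LieAlgebra.ExtendScalars.bracket_tmul, ← pow_add]

theorem xt_zero (s : ℕ) : xt (0 : L) s = 0 :=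
  (congrArg (ιU L) (TensorProduct.tmul_zero _ _)).trans (map_zero _)

theorem xt_neg_two_nsmul (x : L) (n : ℕ) : xt (-(2 • x)) n = (-2 : ℂ) • xt x n := by
  change ιU L ((X ^ n : ℂ[X]) ⊗ₜ (-(2 • x))) = _
  rw [two_nsmul, TensorProduct.tmul_neg, TensorProduct.tmul_add, map_neg, map_add, neg_smul,
    two_smul]

theorem xt_smul_xt_smul_comm (x : L) (a b : ℕ) (v : M) :
    xt x a • xt x b • v = xt x b • xt x a • v := by
  have h := xt_mul_sub_mul_xt x x a b
  rw [lie_self, xt_zero, sub_eq_zero] at h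
  rw [smul_smul, smul_smul, h]

/-- `compositionSum f w r s = ∑_{b₁+⋯+b_r = s} (f ⊗ t^{b₁}) ⋯ (f ⊗ t^{b_r}) • w`. -/
def compositionSum (f : L) (w : M) : ℕ → ℕ → M
  | 0, s => if s = 0 then w else 0
  | r + 1, s => ∑ a ∈ range (s + 1), xt f a • compositionSum f w r (s - a)

variable {e f h : L} {w : M}

theorem compositionSum_succ (r s : ℕ) :
    compositionSum f w (r + 1) s = ∑ a ∈ range (s + 1), xt f a • compositionSum f w r (s - a) :=
  rfl

@[simp]
theorem compositionSum_zero_succ (s : ℕ) : compositionSum f w 0 (s + 1) = 0 := rfl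

theorem compositionSum_one (s : ℕ) : compositionSum f w 1 s = xt f s • w := by
  rw [compositionSum_succ, sum_eq_single_of_mem s (self_mem_range_succ s)]
  · simp [compositionSum]
  · intro b hb hbs
    simp [compositionSum, show s - b ≠ 0 by simp only [mem_range] at hb; omega]

theorem compositionSum_zero_right (n : ℕ) : compositionSum f w n 0 = xt f 0 ^ n • w := by
  induction n with
  | zero => simp [compositionSum]
  | succ n ih => rw [compositionSum_succ, sum_range_one, ih, smul_smul, ← pow_succ']

theorem xt_smul_compositionSum_mem {P : Submodule (UCA L) M} {a : ℕ} (ha : xt f a • w ∈ P) :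
    ∀ r s, xt f a • compositionSum f w r s ∈ P
  | 0, 0 => ha
  | 0, _ + 1 => by simp
  | r + 1, s => by
    rw [compositionSum_succ, smul_sum]
    exact sum_mem fun b _ => by
      rw [xt_smul_xt_smul_comm]; exact P.smul_mem _ (xt_smul_compositionSum_mem ha r (s - b))

/-- A composition of `s > r(σ - 1)` into `r` parts has a part `≥ σ`. -/
theorem compositionSum_mem {P : Submodule (UCA L) M} {σ : ℕ} (hP : ∀ j, σ ≤ j → xt f j • w ∈ P) :
    ∀ r s, r * (σ - 1) < s → compositionSum f w r s ∈ P
  | 0, 0, hs => by simp at hs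
  | 0, _ + 1, _ => by simp
  | r + 1, s, hs => by
    rw [compositionSum_succ]
    refine sum_mem fun a ha => ?_
    by_cases hsa : r * (σ - 1) < s - a
    · exact P.smul_mem _ (compositionSum_mem hP r (s - a) hsa)
    · exact xt_smul_compositionSum_mem (hP a (by rw [add_mul] at hs; omega)) r (s - a)

theorem compositionSum_two_mem_iff {P : Submodule (UCA L) M} {σ : ℕ}
    (hP : ∀ j, σ < j → xt f j • w ∈ P) :
    compositionSum f w 2 (2 * σ) ∈ P ↔ xt f σ ^ 2 • w ∈ P := by
  have hσ : σ ∈ range (2 * σ + 1) := mem_range.2 (by omega)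
  rw [compositionSum_succ, ← add_sum_erase _ _ hσ, compositionSum_one,
    show 2 * σ - σ = σ by omega, smul_smul, ← pow_two]
  refine P.add_mem_iff_left (sum_mem fun a ha => ?_)
  obtain ⟨hne, har⟩ := mem_erase.1 ha
  rw [compositionSum_one]
  rcases lt_or_gt_of_ne hne with h | h
  · exact P.smul_mem _ (hP _ (by omega))
  · rw [xt_smul_xt_smul_comm]
    exact P.smul_mem _ (hP _ h)

theorem pow_smul_eq_zero_of_le {x : UCA L} {n m : ℕ} (hn : x ^ n • w = 0) (hnm : n ≤ m) :
    x ^ m • w = 0 := by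
  obtain ⟨k, rfl⟩ := Nat.exists_eq_add_of_le hnm
  rw [add_comm, pow_add, mul_smul, hn, smul_zero]

theorem xt_smul_xt_smul_of_lie_eq (hef : ⁅e, f⁆ = h) (v : M) (b : ℕ) :
    xt e 1 • xt f b • v = xt f b • xt e 1 • v + xt h (b + 1) • v := by
  have hc := xt_mul_sub_mul_xt e f 1 b
  rw [hef, sub_eq_iff_eq_add, Nat.add_comm 1 b] at hc
  rw [smul_smul, hc, add_smul, mul_smul, add_comm]

variable [Module ℂ M] [IsScalarTower ℂ (UCA L) M]

theorem xt_smul_xt_smul_of_lie_eq_neg_two (hhf : ⁅h, f⁆ = -(2 • f)) (v : M) (c b : ℕ) :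
    xt h c • xt f b • v = xt f b • xt h c • v + (-2 : ℂ) • xt f (b + c) • v := by
  have hc := xt_mul_sub_mul_xt h f c b
  rw [hhf, xt_neg_two_nsmul, sub_eq_iff_eq_add] at hc
  rw [Nat.add_comm b c, smul_smul, hc, add_smul, smul_assoc, mul_smul, add_comm]

theorem xt_smul_compositionSum_succ (hhf : ⁅h, f⁆ = -(2 • f)) (c r b : ℕ) :
    xt h c • compositionSum f w (r + 1) b
      = ∑ a ∈ range (b + 1), xt f a • xt h c • compositionSum f w r (b - a)
        + (-2 : ℂ) • ∑ a ∈ range (b + 1), xt f (a + c) • compositionSum f w r (b - a) := by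
  rw [compositionSum_succ, smul_sum, smul_sum, ← sum_add_distrib]
  exact sum_congr rfl fun a _ => xt_smul_xt_smul_of_lie_eq_neg_two hhf _ c a

/-- `h ⊗ t^{c+1}` raises one index of a monomial of `compositionSum f w r (s - c)` by `c + 1`, so
each monomial `f_{b₁} ⋯ f_{b_r}` with `b₁ + ⋯ + b_r = s + 1` is reached in `s + 1` ways. -/
theorem sum_xt_succ_smul_compositionSum (hhf : ⁅h, f⁆ = -(2 • f))
    (hwh : ∀ k, k ≠ 0 → xt h k • w = 0) :
    ∀ r s, ∑ c ∈ range (s + 1), xt h (c + 1) • compositionSum f w r (s - c)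
      = ((-2 : ℂ) * (s + 1 : ℕ)) • compositionSum f w r (s + 1)
  | 0, s => by
    rw [compositionSum_zero_succ, smul_zero]
    refine sum_eq_zero fun c _ => ?_
    unfold compositionSum
    split_ifs
    exacts [hwh _ c.succ_ne_zero, smul_zero _]
  | r + 1, s => by
    have hshift : ∀ c ∈ range (s + 1), xt h (c + 1) • compositionSum f w (r + 1) (s - c)
        = ∑ a ∈ range (s - c + 1), xt f a • xt h (c + 1) • compositionSum f w r (s - c - a)
          + (-2 : ℂ) • ∑ a ∈ range (s - c + 1),
              xt f (c + a + 1) • compositionSum f w r (s - (c + a)) := by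
      intro c _
      rw [xt_smul_compositionSum_succ hhf]
      congr 2
      exact sum_congr rfl fun a _ => by rw [Nat.sub_sub, show a + (c + 1) = c + a + 1 by omega]
    have hfirst : ∀ a ∈ range (s + 1), ∑ c ∈ range (s - a + 1),
        xt f a • xt h (c + 1) • compositionSum f w r (s - c - a)
          = (-2 : ℂ) • ((s + 1 - a : ℕ) : ℂ) • xt f a • compositionSum f w r (s + 1 - a) := by
      intro a ha
      simp only [Nat.sub_right_comm s _ a]
      rw [← smul_sum, sum_xt_succ_smul_compositionSum hhf hwh r (s - a), smul_comm, mul_smul,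
        show s - a + 1 = s + 1 - a by simp only [mem_range] at ha; omega]
    rw [sum_congr rfl hshift, sum_add_distrib, ← smul_sum,
      sum_range_sum_range_sub_add s (fun m => xt f (m + 1) • compositionSum f w r (s - m)),
      sum_range_sum_range_sub_comm, sum_congr rfl hfirst, compositionSum_succ, mul_smul,
      ← sum_range_sub_smul_add_sum_range_succ_smul, smul_add, ← smul_sum]
    congr 2
    exact sum_congr rfl fun m _ => by rw [Nat.add_sub_add_right, Nat.cast_smul_eq_nsmul]

/-- The first part of a composition of `q` into `r + 1` parts is `q / (r + 1)` on average. -/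
theorem natCast_smul_sum_smul_xt_smul_compositionSum :
    ∀ r q, ((r + 1 : ℕ) : ℂ) • ∑ a ∈ range (q + 1), (a : ℂ) • xt f a • compositionSum f w r (q - a)
      = (q : ℂ) • compositionSum f w (r + 1) q
  | 0, q => by
    rw [sum_eq_single_of_mem q (self_mem_range_succ q), compositionSum_one, Nat.sub_self]
    · simp [compositionSum]
    · intro b hb hbq
      simp [compositionSum, show q - b ≠ 0 by simp only [mem_range] at hb; omega]
  | r + 1, q => by
    have hswap : ∑ a ∈ range (q + 1), (a : ℂ) • xt f a • compositionSum f w (r + 1) (q - a)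
        = ∑ a ∈ range (q + 1), xt f a • ∑ b ∈ range (q - a + 1),
            (b : ℂ) • xt f b • compositionSum f w r (q - a - b) := by
      simp only [compositionSum_succ, smul_sum]
      rw [sum_range_sum_range_sub_comm]
      refine sum_congr rfl fun a _ => sum_congr rfl fun b _ => ?_
      rw [smul_comm _ (b : ℂ), xt_smul_xt_smul_comm, Nat.sub_right_comm]
    have hih : ∀ a ∈ range (q + 1), ((r + 1 : ℕ) : ℂ) • xt f a • ∑ b ∈ range (q - a + 1),
        (b : ℂ) • xt f b • compositionSum f w r (q - a - b)
          = ((q - a : ℕ) : ℂ) • xt f a • compositionSum f w (r + 1) (q - a) := by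
      intro a _
      rw [smul_comm, natCast_smul_sum_smul_xt_smul_compositionSum r (q - a), smul_comm]
    rw [Nat.cast_succ, add_smul, one_smul]
    nth_rw 1 [hswap]
    rw [smul_sum, sum_congr rfl hih, ← sum_add_distrib, compositionSum_succ (r + 1), smul_sum]
    refine sum_congr rfl fun a ha => ?_
    rw [← add_smul, ← Nat.cast_add, Nat.sub_add_cancel (by simp only [mem_range] at ha; omega)]

theorem xt_one_smul_compositionSum_succ (hef : ⁅e, f⁆ = h) (hhf : ⁅h, f⁆ = -(2 • f))
    (hwe : xt e 1 • w = 0) (hwh : ∀ k, k ≠ 0 → xt h k • w = 0) :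
    ∀ r s, xt e 1 • compositionSum f w (r + 1) s
      = (-((r + 1 : ℕ) : ℂ) * (s + 1 : ℕ)) • compositionSum f w r (s + 1)
  | 0, s => by
    rw [compositionSum_one, xt_smul_xt_smul_of_lie_eq hef, hwe, smul_zero, zero_add,
      hwh _ s.succ_ne_zero, compositionSum_zero_succ, smul_zero]
  | r + 1, s => by
    set g : ℕ → M := fun a => xt f a • compositionSum f w r (s + 1 - a) with hg
    have hexpand : xt e 1 • compositionSum f w (r + 2) s
        = ∑ a ∈ range (s + 1), xt f a • xt e 1 • compositionSum f w (r + 1) (s - a)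
          + ∑ a ∈ range (s + 1), xt h (a + 1) • compositionSum f w (r + 1) (s - a) := by
      rw [compositionSum_succ, smul_sum, ← sum_add_distrib]
      exact sum_congr rfl fun a _ => xt_smul_xt_smul_of_lie_eq hef _ a
    have hfirst : ∑ a ∈ range (s + 1), xt f a • xt e 1 • compositionSum f w (r + 1) (s - a)
        = (-((r + 1 : ℕ) : ℂ)) • ∑ a ∈ range (s + 1), ((s + 1 - a : ℕ) : ℂ) • g a := by
      rw [smul_sum]
      refine sum_congr rfl fun a ha => ?_
      rw [xt_one_smul_compositionSum_succ hef hhf hwe hwh r (s - a), smul_comm, mul_smul,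
        show s - a + 1 = s + 1 - a by simp only [mem_range] at ha; omega]
    have hsym : ((r + 1 : ℕ) : ℂ) • ∑ a ∈ range (s + 1), ((a + 1 : ℕ) : ℂ) • g (a + 1)
        = ((s + 1 : ℕ) : ℂ) • compositionSum f w (r + 1) (s + 1) := by
      rw [← natCast_smul_sum_smul_xt_smul_compositionSum, sum_range_succ' _ (s + 1)]
      simp [hg]
    have hsplit := sum_range_sub_smul_add_sum_range_succ_smul (R := ℂ) s g
    rw [← compositionSum_succ] at hsplit
    rw [hexpand, hfirst, sum_xt_succ_smul_compositionSum hhf hwh (r + 1) s]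
    push_cast at hsplit hsym ⊢
    linear_combination (norm := module) (-((r : ℂ) + 1)) • hsplit + hsym

theorem exists_xt_pow_smul_compositionSum (ht : IsSl2Triple h e f) (hwe : xt e 1 • w = 0)
    (hwh : ∀ k, k ≠ 0 → xt h k • w = 0) :
    ∀ j r s, ∃ c : ℂ, c ≠ 0 ∧
      xt e 1 ^ j • compositionSum f w (r + j) s = c • compositionSum f w r (s + j)
  | 0, r, s => ⟨1, one_ne_zero, by simp⟩
  | j + 1, r, s => by
    obtain ⟨c, hc, hcj⟩ := exists_xt_pow_smul_compositionSum ht hwe hwh j r (s + 1)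
    refine ⟨(-((r + j + 1 : ℕ) : ℂ) * (s + 1 : ℕ)) * c,
      mul_ne_zero (mul_ne_zero (neg_ne_zero.2 (Nat.cast_ne_zero.2 (Nat.succ_ne_zero _)))
        (Nat.cast_ne_zero.2 (Nat.succ_ne_zero _))) hc, ?_⟩
    rw [pow_succ, mul_smul, ← add_assoc,
      xt_one_smul_compositionSum_succ ht.lie_e_f ht.lie_h_f_nsmul hwe hwh, smul_comm, hcj,
      smul_smul, Nat.add_right_comm s 1 j, ← add_assoc]

theorem exists_xt_pow_mul_xt_pow_smul (ht : IsSl2Triple h e f) (hwe : xt e 1 • w = 0)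
    (hwh : ∀ k, k ≠ 0 → xt h k • w = 0) (s r : ℕ) :
    ∃ c : ℂ, c ≠ 0 ∧ (xt e 1 ^ s * xt f 0 ^ (s + r)) • w = c • compositionSum f w r s := by
  obtain ⟨c, hc, hcs⟩ := exists_xt_pow_smul_compositionSum ht hwe hwh s r 0
  rw [compositionSum_zero_right, zero_add, add_comm r s] at hcs
  exact ⟨c, hc, by rw [mul_smul, hcs]⟩

theorem xt_smul_eq_zero_of_le (ht : IsSl2Triple h e f) (hwe : xt e 1 • w = 0)
    (hwh : ∀ k, k ≠ 0 → xt h k • w = 0) {N j : ℕ} (hN : xt f 0 ^ (N + 1) • w = 0) (hj : N ≤ j) :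
    xt f j • w = 0 := by
  obtain ⟨c, hc, hcj⟩ := exists_xt_pow_mul_xt_pow_smul ht hwe hwh j 1
  rw [mul_smul, pow_smul_eq_zero_of_le hN (by omega), smul_zero, compositionSum_one] at hcj
  exact (smul_eq_zero_iff_right hc).1 hcj.symm

/-- `h ⊗ t^c` raises the degree of `(f ⊗ t^b) w` by `c`. -/
theorem xt_smul_mem_of_le (hhf : ⁅h, f⁆ = -(2 • f)) (hwh : ∀ k, k ≠ 0 → xt h k • w = 0)
    {P : Submodule (UCA L) M} {b j : ℕ} (hb : xt f b • w ∈ P) (hbj : b ≤ j) : xt f j • w ∈ P := by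
  obtain ⟨c, rfl⟩ := Nat.exists_eq_add_of_le hbj
  rcases Nat.eq_zero_or_pos c with rfl | hc
  · exact hb
  have hmem := P.smul_mem (xt h c) hb
  rw [xt_smul_xt_smul_of_lie_eq_neg_two hhf, hwh c hc.ne', smul_zero, zero_add] at hmem
  exact ((P.restrictScalars ℂ).smul_mem_iff (by norm_num)).1 hmem

theorem xt_pow_mul_xt_pow_smul_mem (ht : IsSl2Triple h e f) (hwe : xt e 1 • w = 0)
    (hwh : ∀ k, k ≠ 0 → xt h k • w = 0) {N σ d m : ℕ} (hN : xt f 0 ^ (N + 1) • w = 0)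
    (hNσ : 0 < N → 1 ≤ σ ∧ N = (σ - 1) * d + m ∧ 0 < m) (hd : d ≤ 3)
    {P : Submodule (UCA L) M} (hP : ∀ j, σ ≤ j → xt f j • w ∈ P)
    (hP₃ : d = 3 → m = 1 → xt f (σ - 1) ^ 2 • w ∈ P) {s r k : ℕ} (hs : 1 ≤ s)
    (hcond : 1 + r * k + tailSum (levelOnePartition σ d m) k ≤ s + r) :
    (xt e 1 ^ s * xt f 0 ^ (s + r)) • w ∈ P := by
  by_cases hbig : N + 1 ≤ s + r
  · rw [mul_smul, pow_smul_eq_zero_of_le hN hbig, smul_zero]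
    exact P.zero_mem
  obtain ⟨hσ, rfl, hm⟩ := hNσ (by omega)
  obtain ⟨c, -, hc⟩ := exists_xt_pow_mul_xt_pow_smul ht hwe hwh s r
  rw [hc]
  refine P.smul_of_tower_mem c ?_
  by_cases hlt : r * (σ - 1) < s
  · exact compositionSum_mem hP r s hlt
  obtain ⟨rfl, rfl, rfl, rfl⟩ :=
    levelOne_relation_exceptional hσ hm hd hcond (by omega) (by omega)
  exact (compositionSum_two_mem_iff fun j hj => hP j (by omega)).2 (hP₃ rfl rfl)

theorem xt_smul_mem_of_relations (ht : IsSl2Triple h e f) (hwe : xt e 1 • w = 0)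
    (hwh : ∀ k, k ≠ 0 → xt h k • w = 0) {N : ℕ} (hN : xt f 0 ^ (N + 1) • w = 0)
    {σ d m : ℕ} (hNσ : 0 < N → 1 ≤ σ) {P : Submodule (UCA L) M}
    (hP : ∀ s r k, 1 ≤ s → 1 ≤ r → 1 ≤ k →
      1 + r * k + tailSum (levelOnePartition σ d m) k ≤ s + r →
      (xt e 1 ^ s * xt f 0 ^ (s + r)) • w ∈ P) :
    xt f σ • w ∈ P := by
  rcases Nat.eq_zero_or_pos N with rfl | hN₀
  · rw [xt_smul_eq_zero_of_le ht hwe hwh hN (Nat.zero_le σ)]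
    exact P.zero_mem
  have hσ := hNσ hN₀
  have hrel := hP σ 1 σ hσ le_rfl hσ (by rw [tailSum_levelOnePartition]; simp [add_comm])
  obtain ⟨c, hc, hcσ⟩ := exists_xt_pow_mul_xt_pow_smul ht hwe hwh σ 1
  rw [hcσ, compositionSum_one] at hrel
  exact ((P.restrictScalars ℂ).smul_mem_iff hc).1 hrel

theorem xt_pow_two_smul_mem_of_relations (ht : IsSl2Triple h e f) (hwe : xt e 1 • w = 0)
    (hwh : ∀ k, k ≠ 0 → xt h k • w = 0) {N : ℕ} (hN : xt f 0 ^ (N + 1) • w = 0) {σ d m : ℕ}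
    (hm : m = 1) (hNσ : 0 < N → 1 ≤ σ ∧ N = (σ - 1) * d + m) {P : Submodule (UCA L) M}
    (hP : ∀ s r k, 1 ≤ s → 1 ≤ r → 1 ≤ k →
      1 + r * k + tailSum (levelOnePartition σ d m) k ≤ s + r →
      (xt e 1 ^ s * xt f 0 ^ (s + r)) • w ∈ P) :
    xt f (σ - 1) ^ 2 • w ∈ P := by
  subst hm
  rcases Nat.eq_zero_or_pos N with rfl | hN₀
  · rw [pow_two, mul_smul, xt_smul_eq_zero_of_le ht hwe hwh hN (Nat.zero_le _), smul_zero]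
    exact P.zero_mem
  obtain ⟨hσ, rfl⟩ := hNσ hN₀
  rcases Nat.lt_or_ge σ 2 with hσ₁ | hσ₂
  · obtain rfl : σ = 1 := by omega
    have h0 : xt f 0 ^ 2 • w = 0 := by simpa using hN
    rw [Nat.sub_self, h0]
    exact P.zero_mem
  have hrel := hP (2 * (σ - 1)) 2 (σ - 1) (by omega) one_le_two (by omega)
    (by rw [tailSum_levelOnePartition, if_pos (by omega), Nat.sub_self, zero_mul]; omega)
  obtain ⟨c, hc, hcσ⟩ := exists_xt_pow_mul_xt_pow_smul ht hwe hwh (2 * (σ - 1)) 2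
  rw [hcσ] at hrel
  refine (compositionSum_two_mem_iff fun j hj => ?_).1
    (((P.restrictScalars ℂ).smul_mem_iff hc).1 hrel)
  exact xt_smul_mem_of_le ht.lie_h_f_nsmul hwh
    (xt_smul_mem_of_relations ht hwe hwh hN (fun _ => hσ) hP) (by omega)

end CurrentSl2

section LocalWeylModule

variable (ep em hc : Φ → L) (simple : ιI → Φ) (lam : Module.Dual ℂ L) (lamNat : Φ → ℕ)

theorem smul_wLam_eq_zero_of_mem {u : UCA L} (hu : u ∈ weylGens ep em hc simple lam lamNat) :
    u • wLam ep em hc simple lam lamNat = 0 := by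
  rw [wLam, ← Submodule.Quotient.mk_smul, smul_eq_mul, mul_one]
  exact (Submodule.Quotient.mk_eq_zero _).2 (Submodule.subset_span hu)

theorem xt_ep_smul_wLam (α : Φ) (k : ℕ) : xt (ep α) k • wLam ep em hc simple lam lamNat = 0 :=
  smul_wLam_eq_zero_of_mem ep em hc simple lam lamNat
    (Or.inl (Or.inl ⟨ep α, Submodule.subset_span (Set.mem_range_self α), k, rfl⟩))

theorem xt_hc_smul_wLam (α : Φ) {k : ℕ} (hk : k ≠ 0) :
    xt (hc α) k • wLam ep em hc simple lam lamNat = 0 :=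
  smul_wLam_eq_zero_of_mem ep em hc simple lam lamNat
    (Or.inl (Or.inr ⟨hc α, Submodule.subset_span (Set.mem_range_self α), k,
      by rw [if_neg hk, zero_smul, sub_zero]⟩))

def levelOneRels (d sα mα : Φ → ℕ) : Set (Wloc ep em hc simple lam lamNat) :=
  {v | (∃ α : Φ, 1 < d α ∧ v = xt (em α) (sα α) • wLam ep em hc simple lam lamNat) ∨
    (∃ α : Φ, d α = 3 ∧ mα α = 1 ∧
      v = (xt (em α) (sα α - 1)) ^ 2 • wLam ep em hc simple lam lamNat)}

variable {ep em hc simple lam lamNat}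

theorem xt_em_smul_wLam_mem_span_levelOneRels (htriple : ∀ α, IsSl2Triple (hc α) (ep α) (em α))
    (hintega : ∀ α, (xt (em α) 0) ^ (lamNat α + 1) • wLam ep em hc simple lam lamNat = 0)
    {d sα mα : Φ → ℕ} (hd : ∀ α, 1 ≤ d α)
    (hsm : ∀ α, 0 < lamNat α → 1 ≤ sα α ∧ lamNat α = (sα α - 1) * d α + mα α ∧ mα α ≤ d α)
    {α : Φ} {j : ℕ} (hj : sα α ≤ j) :
    xt (em α) j • wLam ep em hc simple lam lamNat ∈
      Submodule.span (UCA L) (levelOneRels ep em hc simple lam lamNat d sα mα) := by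
  rcases (hd α).eq_or_lt with hd₁ | hd₁
  · have hj' : lamNat α ≤ j := by
      rcases Nat.eq_zero_or_pos (lamNat α) with hN | hN
      · omega
      · obtain ⟨hσ, hNσ, hmd⟩ := hsm α hN
        rw [← hd₁] at hNσ hmd
        omega
    rw [xt_smul_eq_zero_of_le (htriple α) (xt_ep_smul_wLam ep em hc simple lam lamNat α 1)
      (fun _ hk => xt_hc_smul_wLam ep em hc simple lam lamNat α hk) (hintega α) hj']
    exact Submodule.zero_mem _
  · exact xt_smul_mem_of_le (htriple α).lie_h_f_nsmul
      (fun _ hk => xt_hc_smul_wLam ep em hc simple lam lamNat α hk)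
      (Submodule.subset_span (Or.inl ⟨α, hd₁, rfl⟩)) hj

theorem span_xiGens_levelOne_eq (htriple : ∀ α, IsSl2Triple (hc α) (ep α) (em α))
    (hintega : ∀ α, (xt (em α) 0) ^ (lamNat α + 1) • wLam ep em hc simple lam lamNat = 0)
    {d sα mα : Φ → ℕ} (hd : ∀ α, 1 ≤ d α ∧ d α ≤ 3)
    (hsm : ∀ α, 0 < lamNat α →
      1 ≤ sα α ∧ lamNat α = (sα α - 1) * d α + mα α ∧ 0 < mα α ∧ mα α ≤ d α) :
    Submodule.span (UCA L) (xiGens ep em hc simple lam lamNat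
        fun α => levelOnePartition (sα α) (d α) (mα α))
      = Submodule.span (UCA L) (levelOneRels ep em hc simple lam lamNat d sα mα) := by
  have hwe := fun α => xt_ep_smul_wLam ep em hc simple lam lamNat α 1
  have hwh := fun α (k : ℕ) (hk : k ≠ 0) => xt_hc_smul_wLam ep em hc simple lam lamNat α hk
  refine le_antisymm (Submodule.span_le.2 ?_) (Submodule.span_le.2 ?_)
  · rintro _ ⟨α, s, r, hs, -, ⟨k, -, hcond⟩, rfl⟩
    exact xt_pow_mul_xt_pow_smul_mem (htriple α) (hwe α) (hwh α) (hintega α)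
      (fun hN => (hsm α hN).imp_right fun h => ⟨h.1, h.2.1⟩) (hd α).2
      (fun _ => xt_em_smul_wLam_mem_span_levelOneRels htriple hintega (fun α => (hd α).1)
        (fun α hN => ⟨(hsm α hN).1, (hsm α hN).2.1, (hsm α hN).2.2.2⟩))
      (fun hd₃ hm => Submodule.subset_span (Or.inr ⟨α, hd₃, hm, rfl⟩)) hs hcond
  · have hrel : ∀ α s r k, 1 ≤ s → 1 ≤ r → 1 ≤ k →
        1 + r * k + tailSum (levelOnePartition (sα α) (d α) (mα α)) k ≤ s + r →
        (xt (ep α) 1 ^ s * xt (em α) 0 ^ (s + r)) • wLam ep em hc simple lam lamNat ∈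
          Submodule.span (UCA L) (xiGens ep em hc simple lam lamNat
            fun α => levelOnePartition (sα α) (d α) (mα α)) :=
      fun α s r k hs hr hk hcond => Submodule.subset_span ⟨α, s, r, hs, hr, ⟨k, hk, hcond⟩, rfl⟩
    rintro _ (⟨α, -, rfl⟩ | ⟨α, -, hm, rfl⟩)
    · exact xt_smul_mem_of_relations (htriple α) (hwe α) (hwh α) (hintega α)
        (fun hN => (hsm α hN).1) (hrel α)
    · exact xt_pow_two_smul_mem_of_relations (htriple α) (hwe α) (hwh α) (hintega α) hm
        (fun hN => ⟨(hsm α hN).1, (hsm α hN).2.1⟩) (hrel α)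

end LocalWeylModule

theorem VXi_levelOne_iso_quotient_and_simplyLaced_weyl_general
    {L : Type} [LieRing L] [LieAlgebra ℂ L] {Φ ιI : Type}
    (ep em hc : Φ → L) (simple : ιI → Φ)
    (lam : Module.Dual ℂ L) (lamNat : Φ → ℕ)
    -- the elements `x_α⁺, x_α⁻, h_α` form an `sl₂`-triple for each positive root `α`
    (htriple : ∀ α, IsSl2Triple (hc α) (ep α) (em α))
    -- the relation `(x_α⁻ ⊗ 1)^{λ(h_α)+1} w_λ = 0`, which holds in `W_loc(λ)` by
    -- finite-dimensionality of the local Weyl module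
    (hintega : ∀ α, (xt (em α) 0) ^ (lamNat α + 1) • wLam ep em hc simple lam lamNat = 0)
    -- `d_α = 2/(α,α) ∈ {1,2,3}`
    (d : Φ → ℕ) (hd : ∀ α, 1 ≤ d α ∧ d α ≤ 3)
    -- `s_α, m_α`: the unique integers with `λ(h_α) = (s_α−1) d_α + m_α`, `0 < m_α ≤ d_α`
    (sα mα : Φ → ℕ)
    (hsm : ∀ α, (0 < lamNat α →
        1 ≤ sα α ∧ lamNat α = (sα α - 1) * d α + mα α ∧ 0 < mα α ∧ mα α ≤ d α) ∧
      (lamNat α = 0 → sα α = 0 ∧ mα α = 0))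
    -- `ξ(1,λ)`: the tuple of partitions `ξ^α = (d_α^{s_α−1}, m_α)`
    (ξ : Φ → ℕ → ℕ)
    (hξ : ξ = fun α j => if j + 1 < sα α then d α else if j + 1 = sα α then mα α else 0) :
    Nonempty
      (VXi ep em hc simple lam lamNat ξ ≃ₗ[UCA L]
        Wloc ep em hc simple lam lamNat ⧸
          Submodule.span (UCA L)
            {v | (∃ α : Φ, 1 < d α ∧
                    v = xt (em α) (sα α) • wLam ep em hc simple lam lamNat) ∨
                 (∃ α : Φ, d α = 3 ∧ mα α = 1 ∧
                    v = (xt (em α) (sα α - 1)) ^ 2 • wLam ep em hc simple lam lamNat)}) ∧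
    ((∀ α, d α = 1) →
      Nonempty
        (Wloc ep em hc simple lam lamNat ≃ₗ[UCA L] VXi ep em hc simple lam lamNat ξ)) := by
  subst hξ
  have hspan := span_xiGens_levelOne_eq htriple hintega hd fun α => (hsm α).1
  refine ⟨⟨Submodule.quotEquivOfEq _ _ hspan⟩, fun hd₁ =>
    ⟨(Submodule.quotEquivOfEqBot _ (hspan.trans ?_)).symm⟩⟩
  rw [Submodule.span_eq_bot]
  rintro _ (⟨α, hα, -⟩ | ⟨α, hα, -⟩) <;> simp [hd₁ α] at hα

/-- Proposition `second`.  For nonzero `λ ∈ P⁺`, the module `V(ξ(1,λ))` is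
isomorphic to the quotient of the local Weyl module by the submodule generated by the elements
`(x_α⁻ ⊗ t^{s_α}) w_λ` for `α ∈ R⁺` with `d_α > 1` and the elements
`(x_α⁻ ⊗ t^{s_α−1})² w_λ` for `α ∈ R⁺` with `d_α = 3` and `m_α = 1`.  In particular, if `𝔤`
is simply laced then `W_loc(λ) ≅ V(ξ(1,λ))`. -/
theorem VXi_levelOne_iso_quotient_and_simplyLaced_weyl
    {L : Type} [LieRing L] [LieAlgebra ℂ L] {Φ ιI : Type}
    (ep em hc : Φ → L) (simple : ιI → Φ)
    (lam : Module.Dual ℂ L) (lamNat : Φ → ℕ)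
    -- the elements `x_α⁺, x_α⁻, h_α` form an `sl₂`-triple for each positive root `α`
    (htriple : ∀ α, IsSl2Triple (hc α) (ep α) (em α))
    -- `λ(h_α) = lamNat α` is a non-negative integer for every `α ∈ R⁺`, i.e. `λ ∈ P⁺`
    (hlam : ∀ α, lam (hc α) = (lamNat α : ℂ))
    -- `λ ≠ 0`
    (hlam_ne : lam ≠ 0)
    -- the relation `(x_α⁻ ⊗ 1)^{λ(h_α)+1} w_λ = 0`, which holds in `W_loc(λ)` by
    -- finite-dimensionality of the local Weyl module
    (hintega : ∀ α, (xt (em α) 0) ^ (lamNat α + 1) • wLam ep em hc simple lam lamNat = 0)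
    -- `d_α = 2/(α,α) ∈ {1,2,3}`
    (d : Φ → ℕ) (hd : ∀ α, 1 ≤ d α ∧ d α ≤ 3)
    -- `s_α, m_α`: the unique integers with `λ(h_α) = (s_α−1) d_α + m_α`, `0 < m_α ≤ d_α`
    (sα mα : Φ → ℕ)
    (hsm : ∀ α, (0 < lamNat α →
        1 ≤ sα α ∧ lamNat α = (sα α - 1) * d α + mα α ∧ 0 < mα α ∧ mα α ≤ d α) ∧
      (lamNat α = 0 → sα α = 0 ∧ mα α = 0))
    -- `ξ(1,λ)`: the tuple of partitions `ξ^α = (d_α^{s_α−1}, m_α)`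
    (ξ : Φ → ℕ → ℕ)
    (hξ : ξ = fun α j => if j + 1 < sα α then d α else if j + 1 = sα α then mα α else 0) :
    Nonempty
      (VXi ep em hc simple lam lamNat ξ ≃ₗ[UCA L]
        Wloc ep em hc simple lam lamNat ⧸
          Submodule.span (UCA L)
            {v | (∃ α : Φ, 1 < d α ∧
                    v = xt (em α) (sα α) • wLam ep em hc simple lam lamNat) ∨
                 (∃ α : Φ, d α = 3 ∧ mα α = 1 ∧
                    v = (xt (em α) (sα α - 1)) ^ 2 • wLam ep em hc simple lam lamNat)}) ∧
    ((∀ α, d α = 1) →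
      Nonempty
        (Wloc ep em hc simple lam lamNat ≃ₗ[UCA L] VXi ep em hc simple lam lamNat ξ)) :=
  VXi_levelOne_iso_quotient_and_simplyLaced_weyl_general ep em hc simple lam lamNat htriple hintega
    d hd sα mα hsm ξ hξ

end
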